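/- Let N ≥ 3 be odd, φ ∈ ℝ^N, and let θ be any stationary point of F_φ (with θ_N = 0). Then |cos s_N|^{N−1} ≤ |det 𝓗(θ)| ≤ N · |cos s_N|^{N−1}. In particular, if cos s_N ≠ 0 then the stationary point is nondegenerate, i.e. det 𝓗(θ) ≠ 0. -/

import Mathlib

/-!
At a stationary point, `∂F/∂θ_k = sin s_{k-1} - sin s_k` vanishes for `k = 1, …, N-1`, so all
`sin s_k` agree and `cos s_k = ε_k C` with `ε_k = ±1` and `C = cos s_N`. The Hessian is the
Laplacian of the `N`-cycle with edge weights `cos s_k`, with one vertex deleted, so by the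
matrix-tree theorem its determinant is `∑_k ∏_{j ≠ k} cos s_j = C^{N-1} (∏_j ε_j) (∑_k ε_k)`.
For odd `N` the sum of `N` signs is an odd integer of modulus at most `N`.
-/

open Real Filter

/-- The variable `s k = φ k + θ (k+1) - θ k` (indices cyclic mod `N`,
0-based; paper index `k` corresponds to `k-1` here, so `s_N` is `sVar` at `lastIdx`). -/
noncomputable def sVar (N : ℕ) (hN : 0 < N) (φ θ : Fin N → ℝ) (k : Fin N) : ℝ :=
  φ k + θ ⟨((k : ℕ) + 1) % N, Nat.mod_lt _ hN⟩ - θ k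

/-- The lattice Landau gauge functional / random phase XY Hamiltonian
`F_φ(θ) = Σ_k (1 - cos(φ_k + θ_{k+1} - θ_k))` with periodic boundary conditions. -/
noncomputable def Fxy (N : ℕ) (hN : 0 < N) (φ θ : Fin N → ℝ) : ℝ :=
  ∑ k : Fin N, (1 - Real.cos (sVar N hN φ θ k))

/-- The index of the fixed site (paper site `N`). -/
def lastIdx (N : ℕ) (hN : 0 < N) : Fin N :=
  ⟨N - 1, Nat.sub_lt hN Nat.one_pos⟩

/-- `θ` is a stationary point of `F_φ` regarded as a function of the free
coordinates `θ_1, …, θ_{N-1}` (0-based: coordinates `k` with `k < N-1`),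
with `θ` at `lastIdx` held fixed: all partial derivatives vanish. -/
noncomputable def IsStationaryPt (N : ℕ) (hN : 0 < N) (φ θ : Fin N → ℝ) : Prop :=
  ∀ k : Fin N, (k : ℕ) < N - 1 →
    deriv (fun t : ℝ => Fxy N hN φ (Function.update θ k t)) (θ k) = 0

/-- The `(N-1) × (N-1)` tridiagonal matrix with entries
`δ_{ij}(c_{i-1} + c_i) - δ_{i-1,j} c_{i-1} - δ_{i+1,j} c_i`, where indices are
0-based (paper index `i` ↦ `i-1`) and `c_0 := c_N` (cyclic predecessor). -/
noncomputable def hessC (N : ℕ) (hN : 0 < N) (c : Fin N → ℝ) :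
    Matrix (Fin (N - 1)) (Fin (N - 1)) ℝ :=
  Matrix.of fun i j =>
    (if i = j then
        c ⟨((i : ℕ) + (N - 1)) % N, Nat.mod_lt _ hN⟩ +
          c ⟨(i : ℕ), lt_of_lt_of_le i.isLt (Nat.sub_le N 1)⟩
      else 0)
    - (if (i : ℕ) = (j : ℕ) + 1 then c ⟨((i : ℕ) + (N - 1)) % N, Nat.mod_lt _ hN⟩ else 0)
    - (if (j : ℕ) = (i : ℕ) + 1 then c ⟨(i : ℕ), lt_of_lt_of_le i.isLt (Nat.sub_le N 1)⟩ else 0)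

/-- The Hessian of `F_φ` (with the last coordinate fixed) at a configuration `θ`. -/
noncomputable def hessAt (N : ℕ) (hN : 0 < N) (φ θ : Fin N → ℝ) :
    Matrix (Fin (N - 1)) (Fin (N - 1)) ℝ :=
  hessC N hN fun k => Real.cos (sVar N hN φ θ k)

/-- `F_φ` as a function of the free coordinates only: the coordinate at
`lastIdx` is overwritten by `0`. -/
noncomputable def FxyFixed (N : ℕ) (hN : 0 < N) (φ : Fin N → ℝ) (η : Fin N → ℝ) : ℝ :=
  Fxy N hN φ (Function.update η (lastIdx N hN) 0)

/-- The value `σ = (Φ + 2πl - π Σ_{k=1}^{N-1} q_k) / (1 + Σ_{k=1}^{N-1} (-1)^{q_k})`. -/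
noncomputable def sigmaVal (N : ℕ) (hN : 0 < N) (φ : Fin N → ℝ) (q : Fin N → ℕ) (l : ℤ) : ℝ :=
  ((∑ k, φ k) + 2 * Real.pi * (l : ℝ)
      - Real.pi * ∑ k ∈ Finset.univ.erase (lastIdx N hN), (q k : ℝ)) /
    (1 + ∑ k ∈ Finset.univ.erase (lastIdx N hN), (-1 : ℝ) ^ (q k))

section CycleLaplacian

variable {R : Type*} [CommRing R]

/-- The Laplacian of the cycle on the vertices `0, …, n` whose edge `j — j + 1 (mod n + 1)` has
weight `b j`, with the row and column of vertex `0` deleted. By the matrix-tree theorem its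
determinant is `cycleTreeWeight b n`: the spanning trees are the cycle minus one edge `k`. -/
def cycleLaplacian (b : ℕ → R) (n : ℕ) : Matrix (Fin n) (Fin n) R :=
  Matrix.of fun i j =>
    if (i : ℕ) = j then b i + b (i + 1)
    else if (i : ℕ) = j + 1 then -b i
    else if (j : ℕ) = i + 1 then -b j
    else 0

lemma cycleLaplacian_apply (b : ℕ → R) (n : ℕ) (i j : Fin n) : cycleLaplacian b n i j =
    if (i : ℕ) = j then b i + b (i + 1)
    else if (i : ℕ) = j + 1 then -b i
    else if (j : ℕ) = i + 1 then -b j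
    else 0 := rfl

lemma cycleLaplacian_submatrix_succ (b : ℕ → R) (n : ℕ) :
    (cycleLaplacian b (n + 1)).submatrix Fin.succ Fin.succ =
      cycleLaplacian (fun i => b (i + 1)) n := by
  ext i j
  simp only [Matrix.submatrix_apply, cycleLaplacian_apply, Fin.val_succ]
  split_ifs <;> first | rfl | omega

lemma cycleLaplacian_submatrix_succ_succ (b : ℕ → R) (n : ℕ) :
    (cycleLaplacian b (n + 2)).submatrix (Fin.succ ∘ Fin.succ) (Fin.succ ∘ Fin.succ) =
      cycleLaplacian (fun i => b (i + 2)) n := by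
  rw [← Matrix.submatrix_submatrix, cycleLaplacian_submatrix_succ, cycleLaplacian_submatrix_succ]

lemma det_cycleLaplacian_add_two (b : ℕ → R) (n : ℕ) :
    (cycleLaplacian b (n + 2)).det =
      (b 0 + b 1) * (cycleLaplacian (fun i => b (i + 1)) (n + 1)).det
        - b 1 ^ 2 * (cycleLaplacian (fun i => b (i + 2)) n).det := by
  set A := cycleLaplacian b (n + 2)
  have hsucc_one : (Fin.succAbove 1 ∘ Fin.succ : Fin n → Fin (n + 2)) = Fin.succ ∘ Fin.succ := by
    ext j; simp [Fin.succAbove, Fin.lt_def]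
  -- deleting row `0` and column `1` leaves a matrix whose first column is `(-b 1, 0, …, 0)`
  have hminor : (A.submatrix Fin.succ (Fin.succAbove 1)).det =
      -b 1 * (cycleLaplacian (fun i => b (i + 2)) n).det := by
    rw [Matrix.det_succ_column_zero, Fin.sum_univ_succ]
    simp [A, Matrix.submatrix_submatrix, hsucc_one, cycleLaplacian_submatrix_succ_succ,
      cycleLaplacian_apply]
  have hrow : ∀ j : Fin n, A 0 j.succ.succ = 0 := fun j => by
    simp [A, cycleLaplacian_apply]
  rw [Matrix.det_succ_row_zero, Fin.sum_univ_succ, Fin.sum_univ_succ]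
  simp only [hrow, mul_zero, zero_mul, Finset.sum_const_zero, add_zero, Fin.succAbove_zero,
    Fin.succ_zero_eq_one, hminor, A, cycleLaplacian_submatrix_succ]
  simp [cycleLaplacian_apply]
  ring

def cycleTreeWeight (b : ℕ → R) (n : ℕ) : R :=
  ∑ k : Fin (n + 1), ∏ j : Fin n, b (k.succAbove j)

lemma cycleTreeWeight_succ (b : ℕ → R) (n : ℕ) :
    cycleTreeWeight b (n + 1) =
      ∏ j : Fin (n + 1), b (j + 1) + b 0 * cycleTreeWeight (fun i => b (i + 1)) n := by
  simp only [cycleTreeWeight, Fin.sum_univ_succ (n := n + 1), Fin.succAbove_zero, Fin.val_succ,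
    Fin.prod_univ_succ (n := n), Fin.succ_succAbove_zero, Fin.succ_succAbove_succ, Fin.val_zero,
    Finset.mul_sum]

lemma cycleTreeWeight_add_two (b : ℕ → R) (n : ℕ) :
    cycleTreeWeight b (n + 2) = (b 0 + b 1) * cycleTreeWeight (fun i => b (i + 1)) (n + 1)
      - b 1 ^ 2 * cycleTreeWeight (fun i => b (i + 2)) n := by
  rw [cycleTreeWeight_succ, cycleTreeWeight_succ (fun i => b (i + 1)), Fin.prod_univ_succ]
  simp only [Fin.val_zero, Fin.val_succ, zero_add, add_assoc, one_add_one_eq_two]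
  ring

theorem det_cycleLaplacian (b : ℕ → R) (n : ℕ) :
    (cycleLaplacian b n).det = cycleTreeWeight b n := by
  induction n using Nat.strong_induction_on generalizing b with
  | _ n ih =>
    match n with
    | 0 => simp [cycleTreeWeight]
    | 1 => simp [cycleTreeWeight, cycleLaplacian_apply, Fin.succAbove, add_comm]
    | n + 2 =>
      rw [det_cycleLaplacian_add_two, cycleTreeWeight_add_two, ih (n + 1) (by omega),
        ih n (by omega)]

lemma cycleTreeWeight_congr {b b' : ℕ → R} {n : ℕ} (h : ∀ j ≤ n, b j = b' j) :
    cycleTreeWeight b n = cycleTreeWeight b' n :=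
  Finset.sum_congr rfl fun k _ => Finset.prod_congr rfl fun j _ =>
    h _ (Nat.le_of_lt_succ (k.succAbove j).isLt)

lemma cycleTreeWeight_mul_const (e : ℕ → R) (he : ∀ j, e j * e j = 1) (C : R) (n : ℕ) :
    cycleTreeWeight (fun j => e j * C) n =
      C ^ n * (∏ k : Fin (n + 1), e k) * ∑ k : Fin (n + 1), e k := by
  have hdel : ∀ k : Fin (n + 1), ∏ j : Fin n, e (k.succAbove j) = e k * ∏ i : Fin (n + 1), e i :=
    fun k => by rw [Fin.prod_univ_succAbove _ k, ← mul_assoc, he, one_mul]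
  simp only [cycleTreeWeight, Finset.prod_mul_distrib, Finset.prod_const, Finset.card_univ,
    Fintype.card_fin, hdel, Finset.mul_sum]
  exact Finset.sum_congr rfl fun k _ => by ring

end CycleLaplacian

lemma one_le_abs_sum_of_odd_card {ι : Type*} {s : Finset ι} (hs : Odd s.card) {e : ι → ℝ}
    (he : ∀ i ∈ s, e i = 1 ∨ e i = -1) : 1 ≤ |∑ i ∈ s, e i| := by
  classical
  have hsum : ∑ i ∈ s, e i = ((s.card - 2 * (s.filter (e · = -1)).card : ℤ) : ℝ) := by
    rw [Finset.card_filter]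
    push_cast
    rw [Finset.card_eq_sum_ones, Nat.cast_sum, Finset.mul_sum, ← Finset.sum_sub_distrib]
    refine Finset.sum_congr rfl fun i hi => ?_
    rcases he i hi with h | h <;> norm_num [h]
  obtain ⟨m, hm⟩ := hs
  rw [hsum, ← Int.cast_abs, ← Int.cast_one, Int.cast_le]
  exact Int.one_le_abs (by omega)

lemma abs_sum_le_card {ι : Type*} {s : Finset ι} {e : ι → ℝ}
    (he : ∀ i ∈ s, e i = 1 ∨ e i = -1) : |∑ i ∈ s, e i| ≤ s.card := by
  calc |∑ i ∈ s, e i| ≤ ∑ i ∈ s, |e i| := Finset.abs_sum_le_sum_abs _ _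
    _ = s.card := by
      rw [Finset.card_eq_sum_ones, Nat.cast_sum]
      refine Finset.sum_congr rfl fun i hi => ?_
      rcases he i hi with h | h <;> simp [h]

theorem abs_cycleTreeWeight_bounds {b : ℕ → ℝ} {C : ℝ} {n : ℕ} (hn : Even n)
    (hb : ∀ j ≤ n, |b j| = |C|) :
    |C| ^ n ≤ |cycleTreeWeight b n| ∧ |cycleTreeWeight b n| ≤ (n + 1) * |C| ^ n := by
  set e : ℕ → ℝ := fun j => if b j = C then 1 else -1
  have he : ∀ j, e j = 1 ∨ e j = -1 := fun j => by by_cases h : b j = C <;> simp [e, h]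
  have he_sq : ∀ j, e j * e j = 1 := fun j => by rcases he j with h | h <;> simp [h]
  have he_abs : ∀ j, |e j| = 1 := fun j => by rcases he j with h | h <;> simp [h]
  have hbe : ∀ j ≤ n, b j = e j * C := fun j hj => by
    by_cases h : b j = C
    · simp [e, h]
    · simpa [e, h] using (abs_eq_abs.mp (hb j hj)).resolve_left h
  have habs : |cycleTreeWeight b n| = |C| ^ n * |∑ k : Fin (n + 1), e k| := by
    rw [cycleTreeWeight_congr hbe, cycleTreeWeight_mul_const e he_sq, abs_mul, abs_mul, abs_pow,
      Finset.abs_prod]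
    simp [he_abs]
  have hodd : Odd (Finset.univ : Finset (Fin (n + 1))).card := by simpa using hn.add_one
  rw [habs]
  constructor
  · exact le_mul_of_one_le_right (by positivity)
      (one_le_abs_sum_of_odd_card hodd fun k _ => he k)
  · rw [mul_comm]
    gcongr
    simpa using abs_sum_le_card (s := Finset.univ) (e := fun k : Fin (n + 1) => e k)
      fun k _ => he k

section StationaryPoints

variable {N : ℕ} (hN : 0 < N)

def cycSucc (j : Fin N) : Fin N := ⟨((j : ℕ) + 1) % N, Nat.mod_lt _ hN⟩

def cycPred (k : Fin N) : Fin N := ⟨((k : ℕ) + (N - 1)) % N, Nat.mod_lt _ hN⟩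

lemma cycSucc_eq_iff (j k : Fin N) : cycSucc hN j = k ↔ j = cycPred hN k := by
  simp only [cycSucc, cycPred, Fin.ext_iff]
  constructor <;> intro h
  · rw [← h, Nat.mod_add_mod, show (j : ℕ) + 1 + (N - 1) = j + N by omega, Nat.add_mod_right,
      Nat.mod_eq_of_lt j.isLt]
  · rw [h, Nat.mod_add_mod, show (k : ℕ) + (N - 1) + 1 = k + N by omega, Nat.add_mod_right,
      Nat.mod_eq_of_lt k.isLt]

lemma hasDerivAt_Fxy_update (φ θ : Fin N → ℝ) (k : Fin N) :
    HasDerivAt (fun t => Fxy N hN φ (Function.update θ k t))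
      (Real.sin (sVar N hN φ θ (cycPred hN k)) - Real.sin (sVar N hN φ θ k)) (θ k) := by
  have hupd := hasDerivAt_pi.mp (hasDerivAt_update θ k (θ k))
  have hterm (j : Fin N) :
      HasDerivAt (fun t => 1 - Real.cos (sVar N hN φ (Function.update θ k t) j))
        (Real.sin (sVar N hN φ θ j) *
          ((Pi.single k 1 : Fin N → ℝ) (cycSucc hN j) - (Pi.single k 1 : Fin N → ℝ) j)) (θ k) := by
    have := (((hasDerivAt_const (θ k) (φ j)).add (hupd (cycSucc hN j))).sub
      (hupd j)).cos.const_sub 1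
    simpa [Function.update_eq_self, sVar, cycSucc] using this
  refine (HasDerivAt.fun_sum (u := Finset.univ) fun j _ => hterm j).congr_deriv ?_
  simp [mul_sub, Finset.sum_sub_distrib, Pi.single_apply, cycSucc_eq_iff]

lemma sin_sVar_cycPred_eq (φ θ : Fin N → ℝ) (hstat : IsStationaryPt N hN φ θ) (k : Fin N)
    (hk : (k : ℕ) < N - 1) :
    Real.sin (sVar N hN φ θ (cycPred hN k)) = Real.sin (sVar N hN φ θ k) :=
  sub_eq_zero.mp ((hasDerivAt_Fxy_update hN φ θ k).deriv ▸ hstat k hk)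

lemma sin_sVar_eq_lastIdx (φ θ : Fin N → ℝ) (hstat : IsStationaryPt N hN φ θ) (j : Fin N) :
    Real.sin (sVar N hN φ θ j) = Real.sin (sVar N hN φ θ (lastIdx N hN)) := by
  have hchain : ∀ m (hm : m < N - 1),
      Real.sin (sVar N hN φ θ ⟨m, by omega⟩) = Real.sin (sVar N hN φ θ (lastIdx N hN)) := by
    intro m hm
    induction m with
    | zero =>
      rw [← sin_sVar_cycPred_eq hN φ θ hstat _ hm]
      congr 3
      simp [cycPred, lastIdx, Nat.mod_eq_of_lt (Nat.sub_lt hN Nat.one_pos)]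
    | succ m ih =>
      rw [← sin_sVar_cycPred_eq hN φ θ hstat _ hm, ← ih (by omega)]
      congr 3
      simp only [cycPred, Fin.mk.injEq]
      rw [show m + 1 + (N - 1) = m + N by omega, Nat.add_mod_right, Nat.mod_eq_of_lt (by omega)]
  by_cases hj : (j : ℕ) = N - 1
  · rw [show j = lastIdx N hN from Fin.ext hj]
  · exact hchain j (by omega)

lemma abs_cos_sVar_eq_lastIdx (φ θ : Fin N → ℝ) (hstat : IsStationaryPt N hN φ θ) (j : Fin N) :
    |Real.cos (sVar N hN φ θ j)| = |Real.cos (sVar N hN φ θ (lastIdx N hN))| := by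
  rw [← sq_eq_sq_iff_abs_eq_abs, Real.cos_sq', Real.cos_sq', sin_sVar_eq_lastIdx hN φ θ hstat]

end StationaryPoints

lemma hessC_eq_cycleLaplacian {N : ℕ} (hN : 0 < N) (c : Fin N → ℝ) :
    hessC N hN c =
      cycleLaplacian (fun i => c ⟨(i + (N - 1)) % N, Nat.mod_lt _ hN⟩) (N - 1) := by
  have hsucc : ∀ i : ℕ, i < N - 1 → (i + 1 + (N - 1)) % N = i := fun i hi => by
    rw [show i + 1 + (N - 1) = i + N by omega, Nat.add_mod_right, Nat.mod_eq_of_lt (by omega)]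
  ext i j
  simp only [hessC, cycleLaplacian, Matrix.of_apply, Fin.ext_iff, hsucc i i.isLt]
  split_ifs <;> first | omega | simp [*, hsucc i i.isLt]

/-- at any stationary point of `F_φ` (odd `N`), the Hessian
determinant satisfies `|cos s_N|^{N-1} ≤ |det 𝓗| ≤ N |cos s_N|^{N-1}`;
in particular, if `cos s_N ≠ 0` the stationary point is nondegenerate. -/
theorem stmt9 (N : ℕ) (hN : 3 ≤ N) (hodd : Odd N) (φ θ : Fin N → ℝ)
    (hstat : IsStationaryPt N (by omega) φ θ) :
    |Real.cos (sVar N (by omega) φ θ (lastIdx N (by omega)))| ^ (N - 1) ≤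
        |(hessAt N (by omega) φ θ).det| ∧
    |(hessAt N (by omega) φ θ).det| ≤
        (N : ℝ) * |Real.cos (sVar N (by omega) φ θ (lastIdx N (by omega)))| ^ (N - 1) ∧
    (Real.cos (sVar N (by omega) φ θ (lastIdx N (by omega))) ≠ 0 →
      (hessAt N (by omega) φ θ).det ≠ 0) := by
  have hN0 : 0 < N := by omega
  rw [hessAt, hessC_eq_cycleLaplacian, det_cycleLaplacian]
  obtain ⟨hlower, hupper⟩ := abs_cycleTreeWeight_bounds (Nat.Odd.sub_odd hodd odd_one)
    fun j (_ : j ≤ N - 1) =>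
      abs_cos_sVar_eq_lastIdx hN0 φ θ hstat ⟨(j + (N - 1)) % N, Nat.mod_lt _ hN0⟩
  rw [Nat.cast_pred hN0, sub_add_cancel] at hupper
  exact ⟨hlower, hupper, fun hC => abs_pos.mp (lt_of_lt_of_le (by positivity) hlower)⟩
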